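/- Let λ > 0 and μ ≥ 0, and let ρ : ℝ → ℝ be μ-amenable. Then |ρ'(t)| ≤ λ for every t ≠ 0. -/

import Mathlib

open scoped BigOperators

/-- A function `ρ : ℝ → ℝ` is `μ`-amenable (with selection parameter `lam > 0`):
(i) symmetric around zero with `ρ 0 = 0`; (ii) nondecreasing on `[0, ∞)`;
(iii) `t ↦ ρ t / t` nonincreasing on `(0, ∞)`; (iv) differentiable away from `0`;
(v) `t ↦ ρ t + μ/2 t²` convex; (vi) `ρ'(t) → lam` as `t → 0⁺`. -/
structure Amenable (lam mu : ℝ) (ρ : ℝ → ℝ) : Prop where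
  symm : ∀ t : ℝ, ρ (-t) = ρ t
  zero : ρ 0 = 0
  mono : MonotoneOn ρ (Set.Ici (0 : ℝ))
  ratio : AntitoneOn (fun t => ρ t / t) (Set.Ioi (0 : ℝ))
  diff : ∀ t : ℝ, t ≠ 0 → DifferentiableAt ℝ ρ t
  conv : ConvexOn ℝ Set.univ (fun t => ρ t + mu / 2 * t ^ 2)
  deriv_lim : Filter.Tendsto (deriv ρ) (nhdsWithin 0 (Set.Ioi 0)) (nhds lam)

open Filter Set Topology

/-!
For `t > 0`, monotonicity of `ρ` gives `ρ' t ≥ 0`, and since `s ↦ ρ s / s` is antitone,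
`ρ' t ≤ ρ t / t ≤ lim_{s → 0⁺} ρ s / s`. By L'Hôpital's rule this limit is
`lim_{s → 0⁺} ρ' s = λ`; the rule applies because `ρ` is continuous at `0`, being a convex
function minus a quadratic. Evenness of `ρ` makes `ρ'` odd, which transfers the bound to `t < 0`.
-/

lemma continuous_of_convexOn_add_mul_sq {f : ℝ → ℝ} {c : ℝ}
    (hf : ConvexOn ℝ univ fun t => f t + c * t ^ 2) : Continuous f := by
  have hg : Continuous fun t => f t + c * t ^ 2 :=
    continuousOn_univ.1 (hf.continuousOn isOpen_univ)
  have hsq : Continuous fun t : ℝ => c * t ^ 2 := by fun_prop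
  exact (hg.sub hsq).congr fun t => add_sub_cancel_right (f t) (c * t ^ 2)

lemma Function.Even.deriv_neg {f : ℝ → ℝ} (hf : Function.Even f) (t : ℝ) :
    deriv f (-t) = -deriv f t := by
  have hcomp : (fun x => f (-x)) = f := funext hf
  conv_rhs => rw [← hcomp, deriv_comp_neg, neg_neg]

lemma deriv_nonneg_of_monotoneOn_Ici {f : ℝ → ℝ} {a t : ℝ} (hf : MonotoneOn f (Ici a))
    (ht : a < t) : 0 ≤ deriv f t := by
  rw [← derivWithin_of_isOpen isOpen_Ioi ht]
  exact (hf.mono Ioi_subset_Ici_self).derivWithin_nonneg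

lemma deriv_le_div_of_antitoneOn_div {f : ℝ → ℝ} {t : ℝ}
    (hf : AntitoneOn (fun t => f t / t) (Ioi 0)) (ht : 0 < t) (hft : DifferentiableAt ℝ f t) :
    deriv f t ≤ f t / t := by
  have hquot : HasDerivAt (fun t => f t / t) ((deriv f t * t - f t * 1) / t ^ 2) t :=
    hft.hasDerivAt.div (hasDerivAt_id t) ht.ne'
  have hnonpos : (deriv f t * t - f t * 1) / t ^ 2 ≤ 0 := by
    rw [← hquot.deriv, ← derivWithin_of_isOpen isOpen_Ioi ht]
    exact hf.derivWithin_nonpos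
  rw [le_div_iff₀ ht]
  linarith [(div_le_iff₀ (by positivity)).1 hnonpos]

lemma tendsto_div_nhdsGT_zero_of_tendsto_deriv {f : ℝ → ℝ} {L : ℝ}
    (hdiff : ∀ t, 0 < t → DifferentiableAt ℝ f t) (hf : Tendsto f (𝓝[>] 0) (𝓝 0))
    (hL : Tendsto (deriv f) (𝓝[>] 0) (𝓝 L)) :
    Tendsto (fun t => f t / t) (𝓝[>] 0) (𝓝 L) := by
  refine deriv.lhopital_zero_nhdsGT (eventually_nhdsWithin_of_forall hdiff) ?_ hf
    (tendsto_id.mono_left nhdsWithin_le_nhds) ?_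
  · simp
  · simpa using hL

lemma AntitoneOn.le_of_tendsto_nhdsGT {α β : Type*} [TopologicalSpace α] [LinearOrder α]
    [OrderTopology α] [DenselyOrdered α] [NoMaxOrder α]
    [TopologicalSpace β] [Preorder β] [ClosedIciTopology β]
    {g : α → β} {a t : α} {L : β} (hg : AntitoneOn g (Ioi a))
    (hL : Tendsto g (𝓝[>] a) (𝓝 L)) (ht : a < t) : g t ≤ L := by
  refine ge_of_tendsto hL ?_
  filter_upwards [Ioc_mem_nhdsGT ht] with s hs
  exact hg hs.1 ht hs.2

theorem amenable_abs_deriv_le (lam mu : ℝ)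
    (ρ : ℝ → ℝ) (h : Amenable lam mu ρ) :
    ∀ t : ℝ, t ≠ 0 → |deriv ρ t| ≤ lam := by
  have hcont : Continuous ρ := continuous_of_convexOn_add_mul_sq h.conv
  have hzero : Tendsto ρ (𝓝[>] 0) (𝓝 0) := by
    simpa only [h.zero] using (hcont.tendsto 0).mono_left nhdsWithin_le_nhds
  have hratio : Tendsto (fun t => ρ t / t) (𝓝[>] 0) (𝓝 lam) :=
    tendsto_div_nhdsGT_zero_of_tendsto_deriv (fun t ht => h.diff t ht.ne') hzero h.deriv_lim
  have hpos : ∀ t, 0 < t → |deriv ρ t| ≤ lam := fun t ht => by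
    rw [abs_of_nonneg (deriv_nonneg_of_monotoneOn_Ici h.mono ht)]
    exact (deriv_le_div_of_antitoneOn_div h.ratio ht (h.diff t ht.ne')).trans
      (h.ratio.le_of_tendsto_nhdsGT hratio ht)
  intro t ht
  rcases ht.lt_or_gt with hneg | htpos
  · rw [← neg_neg t, Function.Even.deriv_neg h.symm, abs_neg]
    exact hpos _ (neg_pos.2 hneg)
  · exact hpos t htpos
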